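/- Define l : M₂(ℝ) → ℝ by l(v) := −(1/2)(v¹₂ − v²₁)². Let p ∈ (⋀²ℝ⁴)* have coordinates (e, p¹₁, p¹₂, p²₁, p²₂, r) with r ≠ 0 and r ≠ −2. Then the function v ↦ p(z(v)) − l(v) on M₂(ℝ) has exactly one critical point v*, and its critical value is p(z(v*)) − l(v*) = e + [ (p¹₂ + p²₁)² − 4 p¹₁p²₂ ] / (4r) − (p¹₂ − p²₁)² / (4(2 + r)). -/

import Mathlib

open ExteriorAlgebra

set_option synthInstance.maxHeartbeats 1000000
set_option maxHeartbeats 1000000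

/-- The wedge `v₁ ∧ ⋯ ∧ vₙ` of `n` vectors, as an element of the `n`-th exterior power. -/
noncomputable def wedge {Q : Type*} [AddCommGroup Q] [Module ℝ Q] (n : ℕ) (v : Fin n → Q) :
    ⋀[ℝ]^n Q :=
  ⟨ExteriorAlgebra.ιMulti ℝ n v, ExteriorAlgebra.ιMulti_range ℝ n ⟨v, rfl⟩⟩

/-- The element of the dual of `⋀[ℝ]^n Q` induced by an alternating `n`-form on `Q`. -/
noncomputable def extDual {Q : Type*} [AddCommGroup Q] [Module ℝ Q] (n : ℕ)
    (φ : Q [⋀^Fin n]→ₗ[ℝ] ℝ) : Module.Dual ℝ (⋀[ℝ]^n Q) :=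
  (ExteriorAlgebra.liftAlternating
      (Function.update (fun i => (0 : Q [⋀^Fin i]→ₗ[ℝ] ℝ)) n φ)).comp
    (⋀[ℝ]^n Q).subtype

/-- The basis covector `dξᵃ ∧ dξᵇ ∈ (⋀²ℝ⁴)*`, sending `w₀ ∧ w₁` to
`w₀ᵃ w₁ᵇ − w₁ᵃ w₀ᵇ`.  With the labels `(ξ⁰,ξ¹,ξ²,ξ³) = (x¹,x²,y¹,y²)`, `dd 0 1 = dx¹∧dx²`,
`dd 2 1 = dy¹∧dx²`, `dd 3 1 = dy²∧dx²`, `dd 0 2 = dx¹∧dy¹`, `dd 0 3 = dx¹∧dy²`,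
`dd 2 3 = dy¹∧dy²`. -/
noncomputable def dd (a b : Fin 4) : Module.Dual ℝ (⋀[ℝ]^2 (Fin 4 → ℝ)) :=
  extDual 2 ((Matrix.detRowAlternating : (Fin 2 → ℝ) [⋀^Fin 2]→ₗ[ℝ] ℝ).compLinearMap
    (LinearMap.pi ![(LinearMap.proj a : (Fin 4 → ℝ) →ₗ[ℝ] ℝ), LinearMap.proj b]))

/-- The vectors `u₁ = ∂x¹ + v¹₁∂y¹ + v²₁∂y²`, `u₂ = ∂x² + v¹₂∂y¹ + v²₂∂y²` associated with a
`2×2` matrix `v` (where `v i μ = v^(i+1)_(μ+1)`). -/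
noncomputable def ucol (v : Fin 2 → Fin 2 → ℝ) (μ : Fin 2) : Fin 4 → ℝ :=
  (Pi.single (Fin.castLE (by norm_num) μ) 1 : Fin 4 → ℝ) + v 0 μ • (Pi.single 2 1 : Fin 4 → ℝ) + v 1 μ • (Pi.single 3 1 : Fin 4 → ℝ)

/-- The Plücker chart `z(v) = u₁ ∧ u₂ ∈ ⋀²ℝ⁴`. -/
noncomputable def zmap (v : Fin 2 → Fin 2 → ℝ) : ⋀[ℝ]^2 (Fin 4 → ℝ) :=
  wedge 2 (ucol v)

/-- The element of `(⋀²ℝ⁴)*` with coordinates `(e, p¹₁, p¹₂, p²₁, p²₂, r)`, namely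
`e dx¹∧dx² + p¹₁ dy¹∧dx² + p¹₂ dy²∧dx² + p²₁ dx¹∧dy¹ + p²₂ dx¹∧dy² + r dy¹∧dy²`. -/
noncomputable def pform (e p11 p12 p21 p22 r : ℝ) : Module.Dual ℝ (⋀[ℝ]^2 (Fin 4 → ℝ)) :=
  e • dd 0 1 + p11 • dd 2 1 + p12 • dd 3 1 + p21 • dd 0 2 + p22 • dd 0 3 + r • dd 2 3

/-!
In the chart `z`, `p(z(v)) = e + p¹₁v¹₁ + p¹₂v²₁ + p²₁v¹₂ + p²₂v²₂ + r det v`, so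
`v ↦ p(z(v)) − l(v)` is a quadratic polynomial in the four entries of `v`. Its gradient is affine
in `v`: the diagonal equations give `v¹₁ = −p²₂/r`, `v²₂ = −p¹₁/r`, and the off-diagonal ones form a
`2×2` system in `(v¹₂, v²₁)` with determinant `1 − (1 + r)² = −r(r + 2)`. Hence for `r ≠ 0, −2` there
is exactly one critical point, and substituting it gives the critical value.
-/

lemma dd_wedge (a b : Fin 4) (u : Fin 2 → Fin 4 → ℝ) :
    dd a b (wedge 2 u) = u 0 a * u 1 b - u 0 b * u 1 a := by
  change ExteriorAlgebra.liftAlternating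
      (Function.update (fun i => (0 : (Fin 4 → ℝ) [⋀^Fin i]→ₗ[ℝ] ℝ)) 2 _)
    (ExteriorAlgebra.ιMulti ℝ 2 u) = _
  rw [ExteriorAlgebra.liftAlternating_apply_ιMulti, Function.update_self,
    AlternatingMap.compLinearMap_apply]
  change Matrix.det (Matrix.of _) = _
  rw [Matrix.det_fin_two]
  simp

lemma ucol_apply (v : Fin 2 → Fin 2 → ℝ) (μ : Fin 2) :
    ucol v μ = ![if μ = 0 then 1 else 0, if μ = 1 then 1 else 0, v 0 μ, v 1 μ] := by
  ext k
  fin_cases μ <;> fin_cases k <;> simp [ucol, Fin.castLE]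

lemma pform_zmap (e p11 p12 p21 p22 r : ℝ) (v : Fin 2 → Fin 2 → ℝ) :
    pform e p11 p12 p21 p22 r (zmap v) =
      e + p11 * v 0 0 + p12 * v 1 0 + p21 * v 0 1 + p22 * v 1 1
        + r * (v 0 0 * v 1 1 - v 0 1 * v 1 0) := by
  simp only [pform, zmap, LinearMap.add_apply, LinearMap.smul_apply, dd_wedge, smul_eq_mul,
    ucol_apply]
  simp only [Fin.isValue, Matrix.cons_val, Matrix.cons_val_zero, Matrix.cons_val_one, ↓reduceIte,
    zero_ne_one, one_ne_zero]
  ring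

section Pairing

variable {ι κ : Type*}

noncomputable def entryCLM (i : ι) (μ : κ) : (ι → κ → ℝ) →L[ℝ] ℝ :=
  (ContinuousLinearMap.proj (R := ℝ) (φ := fun _ : κ => ℝ) μ).comp
    (ContinuousLinearMap.proj (R := ℝ) (φ := fun _ : ι => κ → ℝ) i)

@[simp]
lemma entryCLM_apply (i : ι) (μ : κ) (w : ι → κ → ℝ) : entryCLM i μ w = w i μ := rfl

variable [Fintype ι] [Fintype κ]

noncomputable def pairingCLM (a : ι → κ → ℝ) : (ι → κ → ℝ) →L[ℝ] ℝ :=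
  ∑ i, ∑ μ, a i μ • entryCLM i μ

lemma pairingCLM_apply (a w : ι → κ → ℝ) : pairingCLM a w = ∑ i, ∑ μ, a i μ * w i μ := by
  simp [pairingCLM]

lemma pairingCLM_eq_zero_iff [DecidableEq ι] [DecidableEq κ] (a : ι → κ → ℝ) :
    pairingCLM a = 0 ↔ a = 0 := by
  refine ⟨fun h => funext₂ fun i μ => ?_, fun h => by ext w; simp [pairingCLM_apply, h]⟩
  simpa [pairingCLM_apply, Pi.single_apply, ite_apply] using
    congrArg (· (Pi.single i (Pi.single μ 1))) h

end Pairing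

section Maxwell

variable (e p11 p12 p21 p22 r : ℝ)

/-- The function `v ↦ p(z(v)) − l(v)`, written out in the entries of `v`. -/
noncomputable def maxwellAction (v : Fin 2 → Fin 2 → ℝ) : ℝ :=
  e + p11 * v 0 0 + p12 * v 1 0 + p21 * v 0 1 + p22 * v 1 1
    + r * (v 0 0 * v 1 1 - v 0 1 * v 1 0) + (1 / 2) * (v 0 1 - v 1 0) ^ 2

def maxwellGradient (v : Fin 2 → Fin 2 → ℝ) : Fin 2 → Fin 2 → ℝ :=
  ![![p11 + r * v 1 1, p21 + v 0 1 - (r + 1) * v 1 0],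
    ![p12 - (r + 1) * v 0 1 + v 1 0, p22 + r * v 0 0]]

lemma hasFDerivAt_maxwellAction (v : Fin 2 → Fin 2 → ℝ) :
    HasFDerivAt (maxwellAction e p11 p12 p21 p22 r)
      (pairingCLM (maxwellGradient p11 p12 p21 p22 r v)) v := by
  have h (i μ : Fin 2) : HasFDerivAt (fun w : Fin 2 → Fin 2 → ℝ => w i μ) (entryCLM i μ) v :=
    (entryCLM i μ).hasFDerivAt
  have H := ((((((hasFDerivAt_const e v).add ((h 0 0).const_mul p11)).add
      ((h 1 0).const_mul p12)).add ((h 0 1).const_mul p21)).add ((h 1 1).const_mul p22)).add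
      ((((h 0 0).mul (h 1 1)).sub ((h 0 1).mul (h 1 0))).const_mul r)).add
      ((((h 0 1).sub (h 1 0)).pow 2).const_mul (1 / 2))
  refine H.congr_fderiv ?_
  ext w
  simp only [Fin.isValue, zero_add, one_div, Pi.sub_apply, Nat.add_one_sub_one, pow_one,
    nsmul_eq_mul, Nat.cast_ofNat, add_apply, smul_apply, entryCLM_apply, smul_eq_mul, sub_apply,
    maxwellGradient, pairingCLM_apply, Matrix.cons_val', Matrix.cons_val_fin_one,
    Fin.sum_univ_two, Matrix.cons_val_zero, Matrix.cons_val_one]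
  ring

noncomputable def maxwellCriticalPoint : Fin 2 → Fin 2 → ℝ :=
  ![![-p22 / r, (p21 + (r + 1) * p12) / (r * (r + 2))],
    ![(p12 + (r + 1) * p21) / (r * (r + 2)), -p11 / r]]

variable {r}

lemma maxwellGradient_eq_zero_iff (hr : r ≠ 0) (hr' : r + 2 ≠ 0) (v : Fin 2 → Fin 2 → ℝ) :
    maxwellGradient p11 p12 p21 p22 r v = 0 ↔ v = maxwellCriticalPoint p11 p12 p21 p22 r := by
  have hrr : r * (r + 2) ≠ 0 := mul_ne_zero hr hr'
  simp only [maxwellGradient, maxwellCriticalPoint, funext_iff, Fin.forall_fin_two,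
    Matrix.cons_val_zero, Matrix.cons_val_one, Pi.zero_apply]
  constructor
  · rintro ⟨⟨h00, h01⟩, h10, h11⟩
    refine ⟨⟨?_, ?_⟩, ?_, ?_⟩
    · rw [eq_div_iff hr]; linarith
    · rw [eq_div_iff hrr]; linear_combination -h01 - (r + 1) * h10
    · rw [eq_div_iff hrr]; linear_combination -(r + 1) * h01 - h10
    · rw [eq_div_iff hr]; linarith
  · rintro ⟨⟨h00, h01⟩, h10, h11⟩
    rw [h00, h01, h10, h11]
    refine ⟨⟨?_, ?_⟩, ?_, ?_⟩ <;> field_simp <;> ring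

lemma maxwellAction_criticalPoint (hr : r ≠ 0) (hr' : r + 2 ≠ 0) :
    maxwellAction e p11 p12 p21 p22 r (maxwellCriticalPoint p11 p12 p21 p22 r) =
      e + ((p12 + p21) ^ 2 - 4 * p11 * p22) / (4 * r) - (p12 - p21) ^ 2 / (4 * (2 + r)) := by
  have hr'' : 2 + r ≠ 0 := by rwa [add_comm]
  simp only [maxwellAction, maxwellCriticalPoint, Matrix.cons_val_zero, Matrix.cons_val_one]
  field_simp
  ring

end Maxwell

/-- Example 6 of the paper, Maxwell equations in two dimensions: for `r ≠ 0`
and `r ≠ −2` the map `v ↦ p(z(v)) − l(v)`, with `l(v) = −(1/2)(v¹₂ − v²₁)²`, has exactly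
one critical point, with critical value
`e + ((p¹₂ + p²₁)² − 4p¹₁p²₂)/(4r) − (p¹₂ − p²₁)²/(4(2 + r))`. -/
theorem statement17 (l : (Fin 2 → Fin 2 → ℝ) → ℝ)
    (hl : l = fun v => -(1 / 2) * (v 0 1 - v 1 0) ^ 2)
    (e p11 p12 p21 p22 r : ℝ) (hr : r ≠ 0) (hr' : r ≠ -2) :
    (∃! v : Fin 2 → Fin 2 → ℝ,
        fderiv ℝ (fun v : Fin 2 → Fin 2 → ℝ =>
          pform e p11 p12 p21 p22 r (zmap v) - l v) v = 0) ∧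
      ∀ v : Fin 2 → Fin 2 → ℝ,
        fderiv ℝ (fun v : Fin 2 → Fin 2 → ℝ =>
            pform e p11 p12 p21 p22 r (zmap v) - l v) v = 0 →
          pform e p11 p12 p21 p22 r (zmap v) - l v =
            e + ((p12 + p21) ^ 2 - 4 * p11 * p22) / (4 * r)
              - (p12 - p21) ^ 2 / (4 * (2 + r)) := by
  have hr2 : r + 2 ≠ 0 := fun h => hr' (by linarith)
  have hfun : (fun v => pform e p11 p12 p21 p22 r (zmap v) - l v) =
      maxwellAction e p11 p12 p21 p22 r := by
    funext v
    rw [hl, pform_zmap, maxwellAction]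
    ring
  have hcrit (v : Fin 2 → Fin 2 → ℝ) :
      fderiv ℝ (maxwellAction e p11 p12 p21 p22 r) v = 0 ↔
        v = maxwellCriticalPoint p11 p12 p21 p22 r := by
    rw [(hasFDerivAt_maxwellAction e p11 p12 p21 p22 r v).fderiv, pairingCLM_eq_zero_iff,
      maxwellGradient_eq_zero_iff p11 p12 p21 p22 hr hr2]
  rw [hfun]
  refine ⟨⟨_, (hcrit _).2 rfl, fun v hv => (hcrit v).1 hv⟩, fun v hv => ?_⟩
  rw [(hcrit v).1 hv]
  exact (congrFun hfun _).trans (maxwellAction_criticalPoint e p11 p12 p21 p22 hr hr2)
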